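/- arXiv:0704.2572 — 7 statements merged into one kernel-verified Lean document; each statement's English description precedes it below -/
import Mathlib

section
/- Let T be an ℝ-tree and G a finitely generated group acting on T by isometries such that every element of G is elliptic (fixes a point). Then G has a global fixed point in T. -/
/-!
Serre's argument. In an `ℝ`-tree the point of a segment `[x, y]` at a given distance from `x` is
unique, so fixed-point sets of isometries are convex, and any three points have a median lying on
the three segments between them. If `g`, `h` and `g * h` are elliptic and `x` is fixed by `g * h`,
the midpoint of `[x, h • x]` is fixed by `h` and, being also the midpoint of `[h • x, g • h • x]`,
by `g`. So fixed-point sets are pairwise intersecting convex sets; medians give the Helly property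
for convex sets, and a point fixed by every generator of `G` is fixed by all of `G`.
-/

def IsGeodesicSpace (X : Type*) [MetricSpace X] : Prop :=
  ∀ x y : X, ∃ γ : ℝ → X, γ 0 = x ∧ γ (dist x y) = y ∧
    ∀ s ∈ Set.Icc (0 : ℝ) (dist x y), ∀ t ∈ Set.Icc (0 : ℝ) (dist x y),
      dist (γ s) (γ t) = |s - t|

def FourPointHyperbolic (X : Type*) [MetricSpace X] (δ : ℝ) : Prop :=
  ∀ x y z w : X,
    dist x w + dist y z ≤ max (dist x y + dist z w) (dist x z + dist y w) + 2 * δ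

section RTree

variable {T : Type*} [MetricSpace T]

def IsBetween (x m y : T) : Prop := dist x m + dist m y = dist x y

def IsMetricConvex (A : Set T) : Prop :=
  ∀ ⦃x⦄, x ∈ A → ∀ ⦃y⦄, y ∈ A → ∀ ⦃m⦄, IsBetween x m y → m ∈ A

theorem IsBetween.symm {x m y : T} (h : IsBetween x m y) : IsBetween y m x := by
  unfold IsBetween at *
  rw [dist_comm y m, dist_comm m x, dist_comm y x]
  linarith

theorem Isometry.isBetween {f : T → T} (hf : Isometry f) {x m y : T} (h : IsBetween x m y) :
    IsBetween (f x) (f m) (f y) := by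
  simpa only [IsBetween, hf.dist_eq] using h

theorem IsMetricConvex.inter {A B : Set T} (hA : IsMetricConvex A) (hB : IsMetricConvex B) :
    IsMetricConvex (A ∩ B) :=
  fun _ hx _ hy _ hm => ⟨hA hx.1 hy.1 hm, hB hx.2 hy.2 hm⟩

theorem FourPointHyperbolic.eq_of_isBetween (hhyp : FourPointHyperbolic T 0) {x m m' y : T}
    (hm : IsBetween x m y) (hm' : IsBetween x m' y) (hd : dist x m = dist x m') : m = m' := by
  unfold IsBetween at hm hm'
  have h := hhyp x m m' y
  rw [show dist x m + dist m' y = dist x m' + dist m y by linarith, max_self] at h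
  exact dist_le_zero.mp (by linarith)

theorem IsGeodesicSpace.exists_isBetween_dist_eq (hgeo : IsGeodesicSpace T) (x y : T) {t : ℝ}
    (ht₀ : 0 ≤ t) (ht : t ≤ dist x y) : ∃ m, IsBetween x m y ∧ dist x m = t := by
  obtain ⟨γ, hγ₀, hγy, hγ⟩ := hgeo x y
  have hx : dist x (γ t) = t := by
    rw [← hγ₀, hγ 0 ⟨le_rfl, dist_nonneg⟩ t ⟨ht₀, ht⟩, zero_sub, abs_neg, abs_of_nonneg ht₀]
  have hy : dist (γ t) y = dist x y - t := by
    rw [← hγy, hγ t ⟨ht₀, ht⟩ _ ⟨dist_nonneg, le_rfl⟩, abs_sub_comm, hγy,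
      abs_of_nonneg (by linarith)]
  exact ⟨γ t, by rw [IsBetween, hx, hy]; ring, hx⟩

theorem exists_median (hgeo : IsGeodesicSpace T) (hhyp : FourPointHyperbolic T 0) (x y z : T) :
    ∃ m, IsBetween x m y ∧ IsBetween x m z ∧ IsBetween y m z := by
  have hxz := dist_triangle x y z
  have hyz := dist_triangle y x z
  rw [dist_comm y x] at hyz
  -- `m` is at distance the Gromov product `(y | z)_x` from `x`
  obtain ⟨m, hm, hxm⟩ := hgeo.exists_isBetween_dist_eq x y
    (t := (dist x y + dist x z - dist y z) / 2) (by linarith) (by linarith)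
  have hmz : dist m z = dist x z - dist x m := by
    have h := hhyp x m z y
    rw [IsBetween] at hm
    rw [show dist x m + dist z y = dist x z + dist m y by rw [dist_comm z y]; linarith,
      max_self] at h
    linarith [dist_triangle x m z]
  refine ⟨m, hm, ?_, ?_⟩ <;> unfold IsBetween at hm ⊢
  · linarith
  · rw [dist_comm y m]; linarith

theorem IsMetricConvex.inter_inter_nonempty (hgeo : IsGeodesicSpace T)
    (hhyp : FourPointHyperbolic T 0) {A B C : Set T} (hA : IsMetricConvex A)
    (hB : IsMetricConvex B) (hC : IsMetricConvex C) (hAB : (A ∩ B).Nonempty)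
    (hAC : (A ∩ C).Nonempty) (hBC : (B ∩ C).Nonempty) : (A ∩ B ∩ C).Nonempty := by
  obtain ⟨c, hcA, hcB⟩ := hAB
  obtain ⟨b, hbA, hbC⟩ := hAC
  obtain ⟨a, haB, haC⟩ := hBC
  obtain ⟨m, hab, hac, hbc⟩ := exists_median hgeo hhyp a b c
  exact ⟨m, ⟨hA hbA hcA hbc, hB haB hcB hac⟩, hC haC hbC hab⟩

theorem IsMetricConvex.biInter_nonempty (hgeo : IsGeodesicSpace T)
    (hhyp : FourPointHyperbolic T 0) {ι : Type*} {s : Finset ι} (hs : s.Nonempty) {A : ι → Set T}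
    (hA : ∀ i ∈ s, IsMetricConvex (A i)) (hpair : ∀ i ∈ s, ∀ j ∈ s, (A i ∩ A j).Nonempty) :
    (⋂ i ∈ s, A i).Nonempty := by
  induction hs using Finset.Nonempty.cons_induction generalizing A with
  | singleton a => simpa using hpair a (Finset.mem_singleton_self a) a (Finset.mem_singleton_self a)
  | cons a s _ hs ih =>
    have hAa : IsMetricConvex (A a) := hA a (Finset.mem_cons_self a s)
    have hAs : ∀ i ∈ s, IsMetricConvex (A i) := fun i hi => hA i (Finset.mem_cons_of_mem hi)
    have hpair_s : ∀ i ∈ s, ∀ j ∈ s, (A i ∩ A j).Nonempty := fun i hi j hj =>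
      hpair i (Finset.mem_cons_of_mem hi) j (Finset.mem_cons_of_mem hj)
    have hpair_a : ∀ i ∈ s, (A i ∩ A a).Nonempty := fun i hi =>
      hpair i (Finset.mem_cons_of_mem hi) a (Finset.mem_cons_self a s)
    obtain ⟨p, hp⟩ := ih (A := fun i => A i ∩ A a) (fun i hi => (hAs i hi).inter hAa)
      fun i hi j hj => by
        obtain ⟨q, ⟨hqi, hqj⟩, hqa⟩ := (hAs i hi).inter_inter_nonempty hgeo hhyp (hAs j hj) hAa
          (hpair_s i hi j hj) (hpair_a i hi) (hpair_a j hj)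
        exact ⟨q, ⟨hqi, hqa⟩, hqj, hqa⟩
    have hp : ∀ i ∈ s, p ∈ A i ∩ A a := Set.mem_iInter₂.1 hp
    obtain ⟨i, hi⟩ := hs
    refine ⟨p, Set.mem_iInter₂.2 fun j hj => ?_⟩
    rcases Finset.mem_cons.1 hj with rfl | hj
    · exact (hp i hi).2
    · exact (hp j hj).1

variable {f g : T → T}

theorem Isometry.isMetricConvex_fixedPoints (hhyp : FourPointHyperbolic T 0) (hf : Isometry f) :
    IsMetricConvex (Function.fixedPoints f) := by
  intro p (hp : f p = p) q (hq : f q = q) m hm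
  have hfm : IsBetween p (f m) q := by simpa only [hp, hq] using hf.isBetween hm
  exact (hhyp.eq_of_isBetween hm hfm (by rw [← hf.dist_eq, hp])).symm

theorem Isometry.exists_fixed_midpoint (hgeo : IsGeodesicSpace T) (hhyp : FourPointHyperbolic T 0)
    (hf : Isometry f) {p : T} (hp : f p = p) (x : T) :
    ∃ m, f m = m ∧ IsBetween x m (f x) ∧ dist x m = dist m (f x) := by
  obtain ⟨m, hm, hxm, hfxm⟩ := exists_median hgeo hhyp x (f x) p
  -- `m` and `f m` are the points of `[p, f x]` at distance `dist p m` from `p`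
  have hfm : IsBetween p (f m) (f x) := by simpa only [hp] using hf.isBetween hxm.symm
  have hfix : f m = m :=
    (hhyp.eq_of_isBetween hfxm.symm hfm (by rw [← hf.dist_eq, hp])).symm
  refine ⟨m, hfix, hm, ?_⟩
  have hpx : dist (f x) p = dist x p := by rw [← hp, hf.dist_eq, hp]
  unfold IsBetween at hxm hfxm
  rw [dist_comm m]
  linarith

theorem Isometry.exists_common_fixedPoint (hgeo : IsGeodesicSpace T)
    (hhyp : FourPointHyperbolic T 0) (hf : Isometry f) (hg : Isometry g)
    (hf_ell : ∃ p, f p = p) (hg_ell : ∃ p, g p = p) (hfg_ell : ∃ x, f (g x) = x) :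
    ∃ m, f m = m ∧ g m = m := by
  obtain ⟨p, hp⟩ := hf_ell
  obtain ⟨q, hq⟩ := hg_ell
  obtain ⟨x, hx⟩ := hfg_ell
  obtain ⟨m, hgm, hm, hxm⟩ := hg.exists_fixed_midpoint hgeo hhyp hq x
  obtain ⟨m', hfm', hm', hxm'⟩ := hf.exists_fixed_midpoint hgeo hhyp hp (g x)
  rw [hx] at hm' hxm'
  have hmm' : m = m' := by
    refine hhyp.eq_of_isBetween hm hm'.symm ?_
    unfold IsBetween at hm hm'
    rw [dist_comm (g x) x] at hm'
    rw [dist_comm x m']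
    linarith
  exact ⟨m, hmm' ▸ hfm', hgm⟩

end RTree

theorem fg_elliptic_action_on_rtree_has_fixed_point_general
    {T : Type*} [MetricSpace T]
    (hgeo : IsGeodesicSpace T) (hhyp : FourPointHyperbolic T 0)
    {G : Type*} [Group G] [MulAction G T]
    (hiso : ∀ g : G, Isometry fun t : T => g • t)
    (hfg : ∃ S : Finset G, Subgroup.closure (S : Set G) = ⊤)
    (hell : ∀ g : G, ∃ p : T, g • p = p) :
    ∃ p : T, ∀ g : G, g • p = p := by
  classical
  obtain ⟨S, hS⟩ := hfg
  -- `1` is added so that the family of fixed-point sets is nonempty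
  obtain ⟨p, hp⟩ := IsMetricConvex.biInter_nonempty hgeo hhyp (Finset.insert_nonempty 1 S)
    (A := fun g : G => Function.fixedPoints (g • · : T → T))
    (fun g _ => (hiso g).isMetricConvex_fixedPoints hhyp)
    fun g _ h _ => (hiso g).exists_common_fixedPoint hgeo hhyp (hiso h) (hell g) (hell h)
      (by simpa only [mul_smul] using hell (g * h))
  have hgen : Subgroup.closure (S : Set G) ≤ MulAction.stabilizer G p :=
    (Subgroup.closure_le _).2 fun s hs => Set.mem_iInter₂.1 hp s (Finset.mem_insert_of_mem hs)
  exact ⟨p, fun g => hgen (hS ▸ Subgroup.mem_top g)⟩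

/-- If a finitely generated group `G` acts by isometries on an `ℝ`-tree (a complete
geodesic `0`-hyperbolic space) and every element of `G` is elliptic (fixes a point),
then `G` has a global fixed point. -/
theorem fg_elliptic_action_on_rtree_has_fixed_point
    {T : Type*} [MetricSpace T] [CompleteSpace T]
    (hgeo : IsGeodesicSpace T) (hhyp : FourPointHyperbolic T 0)
    {G : Type*} [Group G] [MulAction G T]
    (hiso : ∀ g : G, Isometry fun t : T => g • t)
    (hfg : ∃ S : Finset G, Subgroup.closure (S : Set G) = ⊤)
    (hell : ∀ g : G, ∃ p : T, g • p = p) :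
    ∃ p : T, ∀ g : G, g • p = p :=
  fg_elliptic_action_on_rtree_has_fixed_point_general hgeo hhyp hiso hfg hell
end

section
/- In a proper geodesic δ-hyperbolic space, the set of centers of any bounded subset has diameter at most 100δ. (A center of a bounded set Y of radius r is a point c such that Y ⊆ B(c, r') for every r' > r, where the radius of Y is the infimum of r such that Y is contained in some ball of radius r.) -/
/-- The radius of a bounded set: the infimum of `r` such that `Y` is contained in some
closed ball of radius `r`. -/
noncomputable def setRadius {X : Type*} [MetricSpace X] (Y : Set X) : ℝ :=
  sInf {r : ℝ | ∃ p : X, Y ⊆ Metric.closedBall p r}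

/-- A center of a bounded set `Y`: a point `c` with `Y ⊆ B(c, r')` for every
`r' > radius Y`. -/
def IsCenter {X : Type*} [MetricSpace X] (Y : Set X) (c : X) : Prop :=
  ∀ r : ℝ, setRadius Y < r → Y ⊆ Metric.closedBall c r

/-! A midpoint `m` of two centers `c₁, c₂` is, by the four-point condition applied to `y, c₁, c₂, m`,
within `max (d(y,c₁), d(y,c₂)) - d(c₁,c₂)/2 + 2δ` of every `y ∈ Y`. Since `m` cannot beat the
radius of `Y`, this forces `d(c₁,c₂) ≤ 4δ`. -/

section

open Metric

variable {X : Type*} [MetricSpace X]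

theorem IsGeodesicSpace.exists_midpoint (h : IsGeodesicSpace X) (x y : X) :
    ∃ m, dist x m = dist x y / 2 ∧ dist y m = dist x y / 2 := by
  obtain ⟨γ, hγ0, hγd, hγ⟩ := h x y
  set d := dist x y
  have hd : 0 ≤ d := dist_nonneg
  have hmid : d / 2 ∈ Set.Icc 0 d := ⟨by linarith, by linarith⟩
  refine ⟨γ (d / 2), ?_, ?_⟩
  · rw [← hγ0, hγ 0 ⟨le_rfl, hd⟩ _ hmid, abs_of_nonpos (by linarith)]
    ring
  · rw [← hγd, hγ d ⟨hd, le_rfl⟩ _ hmid, abs_of_nonneg (by linarith)]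
    ring

theorem FourPointHyperbolic.dist_midpoint_le {δ : ℝ} (h : FourPointHyperbolic X δ) {x y m : X}
    (hx : dist x m = dist x y / 2) (hy : dist y m = dist x y / 2) (z : X) :
    dist z m ≤ max (dist z x) (dist z y) - dist x y / 2 + 2 * δ := by
  have := h z x y m
  rw [hx, hy, max_add_add_right] at this
  linarith

theorem setRadius_le {Y : Set X} (hY : Y.Nonempty) {p : X} {s : ℝ}
    (hp : Y ⊆ closedBall p s) : setRadius Y ≤ s := by
  refine csInf_le ⟨0, ?_⟩ ⟨p, hp⟩
  rintro r ⟨q, hq⟩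
  obtain ⟨y, hy⟩ := hY
  exact dist_nonneg.trans (hq hy)

theorem setRadius_le_of_forall_pos {Y : Set X} (hY : Y.Nonempty) {s : ℝ}
    (h : ∀ ε > 0, ∃ p, Y ⊆ closedBall p (s + ε)) : setRadius Y ≤ s :=
  le_of_forall_pos_le_add fun ε hε =>
    let ⟨_, hp⟩ := h ε hε
    setRadius_le hY hp

theorem IsCenter.dist_le {δ : ℝ} (hgeo : IsGeodesicSpace X) (hhyp : FourPointHyperbolic X δ)
    {Y : Set X} (hY : Y.Nonempty) {c₁ c₂ : X} (h₁ : IsCenter Y c₁) (h₂ : IsCenter Y c₂) :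
    dist c₁ c₂ ≤ 4 * δ := by
  obtain ⟨m, hm₁, hm₂⟩ := hgeo.exists_midpoint c₁ c₂
  have hm : setRadius Y ≤ setRadius Y - dist c₁ c₂ / 2 + 2 * δ := by
    refine setRadius_le_of_forall_pos hY fun ε hε => ⟨m, fun y hy => ?_⟩
    have hy₁ : dist y c₁ ≤ setRadius Y + ε := h₁ _ (by linarith) hy
    have hy₂ : dist y c₂ ≤ setRadius Y + ε := h₂ _ (by linarith) hy
    have := hhyp.dist_midpoint_le hm₁ hm₂ y
    rw [mem_closedBall]
    linarith [max_le hy₁ hy₂]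
  linarith

end

theorem centers_diameter_le_general {X : Type*} [MetricSpace X] (δ : ℝ)
    (hgeo : IsGeodesicSpace X) (hhyp : FourPointHyperbolic X δ)
    (Y : Set X) (hne : Y.Nonempty)
    (c₁ c₂ : X) (h₁ : IsCenter Y c₁) (h₂ : IsCenter Y c₂) :
    dist c₁ c₂ ≤ 100 * δ := by
  have h := IsCenter.dist_le hgeo hhyp hne h₁ h₂
  linarith [dist_nonneg (x := c₁) (y := c₂)]

/-- In a proper geodesic `δ`-hyperbolic space, the set of centers of a bounded set has
diameter at most `100δ`. -/
theorem centers_diameter_le {X : Type*} [MetricSpace X] [ProperSpace X] (δ : ℝ)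
    (hδ : 0 ≤ δ) (hgeo : IsGeodesicSpace X) (hhyp : FourPointHyperbolic X δ)
    (Y : Set X) (hne : Y.Nonempty) (hbdd : Bornology.IsBounded Y)
    (c₁ c₂ : X) (h₁ : IsCenter Y c₁) (h₂ : IsCenter Y c₂) :
    dist c₁ c₂ ≤ 100 * δ :=
  centers_diameter_le_general δ hgeo hhyp Y hne c₁ c₂ h₁ h₂
end

section
/- With generators as in the Grigorchuk group extended by the adding machine x, the identity [[[x,a],d],b] = (1, [[x,b],c]) holds in Aut(T) of the binary rooted tree. -/
namespace GrigTree

/-- Vertices of the rooted binary tree: finite binary strings. -/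
abbrev V := List Bool

/-- The rooted automorphism `a`, swapping the two first-level subtrees. -/
def aFun : V → V
  | [] => []
  | i :: w => (!i) :: w

lemma aFun_invol : ∀ w, aFun (aFun w) = w
  | [] => rfl
  | _ :: _ => by simp [aFun]

/-- The automorphism `a` as a permutation. -/
def a : Equiv.Perm V := ⟨aFun, aFun, aFun_invol, aFun_invol⟩

/-- The adding machine `x = (1, x)a`. -/
def xFun : V → V
  | [] => []
  | false :: w => true :: w
  | true :: w => false :: xFun w

def xInvFun : V → V
  | [] => []
  | true :: w => false :: w
  | false :: w => true :: xInvFun w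

lemma x_left_inv : ∀ w, xInvFun (xFun w) = w
  | [] => rfl
  | false :: _ => rfl
  | true :: w => by simp [xFun, xInvFun, x_left_inv w]

lemma x_right_inv : ∀ w, xFun (xInvFun w) = w
  | [] => rfl
  | true :: _ => rfl
  | false :: w => by simp [xFun, xInvFun, x_right_inv w]

/-- The adding machine as a permutation of the tree. -/
def x : Equiv.Perm V := ⟨xFun, xInvFun, x_left_inv, x_right_inv⟩

/-- States of the Grigorchuk automaton (the nontrivial ones). -/
inductive St | b | c | d
  deriving DecidableEq

def nextSt : St → St
  | .b => .c
  | .c => .d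
  | .d => .b

def usesA : St → Bool
  | .b => true
  | .c => true
  | .d => false

/-- The action of the Grigorchuk generators `b = (a,c)`, `c = (a,d)`, `d = (1,b)`. -/
def gFun : St → V → V
  | _, [] => []
  | s, false :: w => false :: (if usesA s then aFun w else w)
  | s, true :: w => true :: gFun (nextSt s) w

lemma gFun_invol : ∀ (w : V) (s : St), gFun s (gFun s w) = w
  | [], _ => rfl
  | false :: w, s => by cases h : usesA s <;> simp [gFun, h, aFun_invol]
  | true :: w, s => by simp [gFun, gFun_invol w]

def gPerm (s : St) : Equiv.Perm V :=
  ⟨gFun s, gFun s, fun w => gFun_invol w s, fun w => gFun_invol w s⟩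

/-- The Grigorchuk generator `b = (a, c)`. -/
def b : Equiv.Perm V := gPerm .b
/-- The Grigorchuk generator `c = (a, d)`. -/
def c : Equiv.Perm V := gPerm .c
/-- The Grigorchuk generator `d = (1, b)`. -/
def d : Equiv.Perm V := gPerm .d

def pairFun (f g : V → V) : V → V
  | [] => []
  | false :: w => false :: f w
  | true :: w => true :: g w

/-- The automorphism `(f, g)` acting as `f` on the left subtree and as `g` on the
right subtree, fixing the first level. -/
def pair (f g : Equiv.Perm V) : Equiv.Perm V where
  toFun := pairFun f g
  invFun := pairFun f.symm g.symm
  left_inv := by rintro (_ | ⟨i, w⟩) <;> first | rfl | cases i <;> simp [pairFun]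
  right_inv := by rintro (_ | ⟨i, w⟩) <;> first | rfl | cases i <;> simp [pairFun]

/-- The commutator `[u, v] = u⁻¹v⁻¹uv` of the paper.  Words of tree automorphisms in the
paper are composed left-to-right, so the paper's word `u⁻¹v⁻¹uv` corresponds to the
permutation `v * u * v⁻¹ * u⁻¹` under the usual (right-to-left) composition of functions. -/
def pcomm (u v : Equiv.Perm V) : Equiv.Perm V := v * u * v⁻¹ * u⁻¹

/-- The conjugate `v⁻¹ u v` of the paper (left-to-right composition). -/
def pconj (u v : Equiv.Perm V) : Equiv.Perm V := v * u * v⁻¹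

/-! Commutators of automorphisms fixing the first level are computed coordinatewise, and the
wreath recursion gives `[x, a] = (x⁻¹, x)`, `d = (1, b)`, `b = (a, c)`. Commuting with `d` and
then with `b` kills the left coordinate (`[x⁻¹, 1] = 1`, then `[1, a] = 1`) and leaves
`[[x, b], c]` on the right. -/

lemma pair_mul (u v u' v' : Equiv.Perm V) :
    pair u v * pair u' v' = pair (u * u') (v * v') := by
  ext w; rcases w with _ | ⟨(_|_), w⟩ <;> rfl

lemma pair_inv (u v : Equiv.Perm V) : (pair u v)⁻¹ = pair u⁻¹ v⁻¹ := by
  ext w; rcases w with _ | ⟨(_|_), w⟩ <;> rfl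

lemma a_mul_pair_mul_a (u v : Equiv.Perm V) : a * pair u v * a = pair v u := by
  ext w; rcases w with _ | ⟨(_|_), w⟩ <;> rfl

lemma a_mul_self : a * a = 1 := Equiv.ext aFun_invol

lemma a_inv : a⁻¹ = a := inv_eq_of_mul_eq_one_right a_mul_self

lemma x_eq_a_mul_pair : x = a * pair 1 x := by
  ext w; rcases w with _ | ⟨(_|_), w⟩ <;> rfl

lemma b_eq_pair : b = pair a c := by
  ext w; rcases w with _ | ⟨(_|_), w⟩ <;> rfl

lemma d_eq_pair : d = pair 1 b := by
  ext w; rcases w with _ | ⟨(_|_), w⟩ <;> rfl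

lemma pcomm_one_left (v : Equiv.Perm V) : pcomm 1 v = 1 := by
  simp [pcomm]

lemma pcomm_one_right (u : Equiv.Perm V) : pcomm u 1 = 1 := by
  simp [pcomm]

lemma pcomm_pair (u v u' v' : Equiv.Perm V) :
    pcomm (pair u v) (pair u' v') = pair (pcomm u u') (pcomm v v') := by
  simp only [pcomm, pair_inv, pair_mul]

lemma pcomm_x_a : pcomm x a = pair x⁻¹ x := by
  have hx := x_eq_a_mul_pair
  calc pcomm x a = a * (a * pair 1 x) * a * (a * pair 1 x)⁻¹ := by rw [pcomm, a_inv, ← hx]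
    _ = pair 1 x * (a * (pair 1 x)⁻¹ * a) := by
        rw [mul_inv_rev, a_inv, ← mul_assoc a a, a_mul_self, one_mul]
        simp only [mul_assoc]
    _ = pair x⁻¹ x := by rw [pair_inv, inv_one, a_mul_pair_mul_a, pair_mul, one_mul, mul_one]

/-- The identity `[[[x, a], d], b] = (1, [[x, b], c])` of Lemma 2.3. -/
theorem commutator_x_a_d_b :
    pcomm (pcomm (pcomm x a) d) b = pair 1 (pcomm (pcomm x b) c) :=
  calc pcomm (pcomm (pcomm x a) d) b
      = pcomm (pcomm (pair x⁻¹ x) (pair 1 b)) (pair a c) := by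
        rw [pcomm_x_a, d_eq_pair, b_eq_pair]
    _ = pair 1 (pcomm (pcomm x b) c) := by
        simp only [pcomm_pair, pcomm_one_left, pcomm_one_right]

end GrigTree
end

section
/- The group L = ⟨a,b,c,d,x⟩ ≤ Aut(T) (Grigorchuk generators plus the adding machine) is self-replicating: for every vertex u of the binary rooted tree, the image of the stabilizer st_L(u) under projection to Aut(T_u) ≅ Aut(T) equals L. -/
/-!
Every element of `L` is `(g₀, g₁)` or `(g₀, g₁)a` with `g₀, g₁ ∈ L`, and conversely every element
of `L` is the section at either first-level vertex of some element of `st_L(1)`. Hence the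
projection of `st_L(iu)` to `T_{iu}` equals that of `st_L(u)` to `T_u`, and induction on `u`
reduces the claim to the root, where it is trivial.
-/

namespace GrigTree

/-- The group `L = ⟨a, b, c, d, x⟩`. -/
def L : Subgroup (Equiv.Perm V) := Subgroup.closure {a, b, c, d, x}

lemma pair_one : pair 1 1 = (1 : Equiv.Perm V) := by
  ext (_ | ⟨_ | _, _⟩) <;> rfl

lemma pair_mul_s12 (f₀ f₁ h₀ h₁ : Equiv.Perm V) :
    pair f₀ f₁ * pair h₀ h₁ = pair (f₀ * h₀) (f₁ * h₁) := by
  ext (_ | ⟨_ | _, _⟩) <;> rfl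

lemma pair_inv_s12 (f₀ f₁ : Equiv.Perm V) : (pair f₀ f₁)⁻¹ = pair f₀⁻¹ f₁⁻¹ :=
  inv_eq_of_mul_eq_one_right (by rw [pair_mul_s12, mul_inv_cancel, mul_inv_cancel, pair_one])

lemma a_mul_pair (f₀ f₁ : Equiv.Perm V) : a * pair f₀ f₁ = pair f₁ f₀ * a := by
  ext (_ | ⟨_ | _, _⟩) <;> rfl

lemma c_eq_pair : c = pair a d := by
  ext (_ | ⟨_ | _, _⟩) <;> rfl

lemma x_eq_pair_mul_a : x = pair x 1 * a := by
  ext (_ | ⟨_ | _, _⟩) <;> rfl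

/-- The image of `H ≀ C₂` in `Aut(T)`. -/
def wreath (H : Subgroup (Equiv.Perm V)) : Subgroup (Equiv.Perm V) where
  carrier := {g | ∃ f₀ ∈ H, ∃ f₁ ∈ H, g = pair f₀ f₁ ∨ g = pair f₀ f₁ * a}
  one_mem' := ⟨1, one_mem H, 1, one_mem H, Or.inl pair_one.symm⟩
  mul_mem' := by
    rintro _ _ ⟨f₀, hf₀, f₁, hf₁, rfl | rfl⟩ ⟨h₀, hh₀, h₁, hh₁, rfl | rfl⟩
    · exact ⟨_, mul_mem hf₀ hh₀, _, mul_mem hf₁ hh₁, Or.inl (pair_mul_s12 ..)⟩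
    · exact ⟨_, mul_mem hf₀ hh₀, _, mul_mem hf₁ hh₁, Or.inr (by rw [← mul_assoc, pair_mul_s12])⟩
    · refine ⟨_, mul_mem hf₀ hh₁, _, mul_mem hf₁ hh₀, Or.inr ?_⟩
      rw [mul_assoc, a_mul_pair, ← mul_assoc, pair_mul_s12]
    · refine ⟨_, mul_mem hf₀ hh₁, _, mul_mem hf₁ hh₀, Or.inl ?_⟩
      rw [mul_assoc, ← mul_assoc a, a_mul_pair, mul_assoc, a_mul_self, mul_one, pair_mul_s12]
  inv_mem' := by
    rintro _ ⟨f₀, hf₀, f₁, hf₁, rfl | rfl⟩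
    · exact ⟨_, inv_mem hf₀, _, inv_mem hf₁, Or.inl (pair_inv_s12 ..)⟩
    · refine ⟨_, inv_mem hf₁, _, inv_mem hf₀, Or.inr ?_⟩
      rw [mul_inv_rev, a_inv, pair_inv_s12, a_mul_pair]

/-- `sectionsAt G u` is the projection of `st_G(u)` to `Aut(T_u)`, the subtree `T_u` being
identified with `T` via `w ↦ u ++ w`. -/
def sectionsAt (G : Subgroup (Equiv.Perm V)) (u : V) : Set (V → V) :=
  {f | ∃ g ∈ G, g u = u ∧ ∀ w : V, g (u ++ w) = u ++ f w}

/-- The projection of `st_G(i)` to the subtree at the first-level vertex `i`. -/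
def restrictCons (G : Subgroup (Equiv.Perm V)) (i : Bool) : Subgroup (Equiv.Perm V) where
  carrier := {h | ∃ g ∈ G, ∀ w : V, g (i :: w) = i :: h w}
  one_mem' := ⟨1, one_mem G, fun _ => rfl⟩
  mul_mem' := by
    rintro h₁ h₂ ⟨g₁, hg₁, e₁⟩ ⟨g₂, hg₂, e₂⟩
    exact ⟨g₁ * g₂, mul_mem hg₁ hg₂, fun w => by simp only [Equiv.Perm.mul_apply, e₂, e₁]⟩
  inv_mem' := by
    rintro h ⟨g, hg, e⟩
    refine ⟨g⁻¹, inv_mem hg, fun w => ?_⟩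
    rw [Equiv.Perm.inv_eq_iff_eq, e, ← Equiv.Perm.mul_apply, mul_inv_cancel, Equiv.Perm.one_apply]

section wreath

variable {G H : Subgroup (Equiv.Perm V)}

lemma apply_nil_of_mem_wreath {g : Equiv.Perm V} (hg : g ∈ wreath H) : g [] = [] := by
  obtain ⟨f₀, -, f₁, -, rfl | rfl⟩ := hg <;> rfl

/-- Such a `g` cannot swap the two subtrees. -/
lemma exists_apply_cons_of_mem_wreath {g : Equiv.Perm V} (hg : g ∈ wreath H) {i : Bool}
    {v v' : V} (hv : g (i :: v) = i :: v') : ∃ h ∈ H, ∀ w : V, g (i :: w) = i :: h w := by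
  obtain ⟨f₀, hf₀, f₁, hf₁, rfl | rfl⟩ := hg
  · cases i
    exacts [⟨f₀, hf₀, fun _ => rfl⟩, ⟨f₁, hf₁, fun _ => rfl⟩]
  · cases i <;> exact absurd hv (by simp [pair, pairFun, a, aFun])

lemma sectionsAt_nil (hG : G ≤ wreath H) : sectionsAt G [] = {f | ∃ h ∈ G, f = ⇑h} := by
  ext f
  constructor
  · rintro ⟨g, hg, -, hgf⟩
    exact ⟨g, hg, funext fun w => (hgf w).symm⟩
  · rintro ⟨h, hh, rfl⟩
    exact ⟨h, hh, apply_nil_of_mem_wreath (hG hh), fun _ => rfl⟩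

lemma sectionsAt_cons (hG : G ≤ wreath G) {i : Bool} (hi : G ≤ restrictCons G i) (u : V) :
    sectionsAt G (i :: u) = sectionsAt G u := by
  ext f
  constructor
  · rintro ⟨g, hg, hgu, hgf⟩
    obtain ⟨h, hh, hgh⟩ := exists_apply_cons_of_mem_wreath (hG hg) hgu
    refine ⟨h, hh, ?_, fun w => ?_⟩
    · simpa only [hgh, List.cons_inj_right] using hgu
    · simpa only [List.cons_append, hgh, List.cons_inj_right] using hgf w
  · rintro ⟨h, hh, hhu, hhf⟩
    obtain ⟨g, hg, hgh⟩ := hi hh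
    exact ⟨g, hg, by rw [hgh, hhu], fun w => by rw [List.cons_append, hgh, hhf, List.cons_append]⟩

end wreath

lemma a_mem_L : a ∈ L := Subgroup.subset_closure (by simp)
lemma b_mem_L : b ∈ L := Subgroup.subset_closure (by simp)
lemma c_mem_L : c ∈ L := Subgroup.subset_closure (by simp)
lemma d_mem_L : d ∈ L := Subgroup.subset_closure (by simp)
lemma x_mem_L : x ∈ L := Subgroup.subset_closure (by simp)

lemma L_le_wreath : L ≤ wreath L := by
  rw [L, Subgroup.closure_le]
  rintro g (rfl | rfl | rfl | rfl | rfl)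
  · exact ⟨1, one_mem L, 1, one_mem L, Or.inr (by rw [pair_one, one_mul])⟩
  · exact ⟨a, a_mem_L, c, c_mem_L, Or.inl b_eq_pair⟩
  · exact ⟨a, a_mem_L, d, d_mem_L, Or.inl c_eq_pair⟩
  · exact ⟨1, one_mem L, b, b_mem_L, Or.inl d_eq_pair⟩
  · exact ⟨x, x_mem_L, 1, one_mem L, Or.inr x_eq_pair_mul_a⟩

/-- The lifts come from `b = (a, c)`, `c = (a, d)`, `d = (1, b)`, their conjugates by `a`,
and `x² = (x, x)`. -/
lemma L_le_restrictCons (i : Bool) : L ≤ restrictCons L i := by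
  have aba_mem_L : a * b * a ∈ L := mul_mem (mul_mem a_mem_L b_mem_L) a_mem_L
  have aca_mem_L : a * c * a ∈ L := mul_mem (mul_mem a_mem_L c_mem_L) a_mem_L
  have ada_mem_L : a * d * a ∈ L := mul_mem (mul_mem a_mem_L d_mem_L) a_mem_L
  have xx_mem_L : x * x ∈ L := mul_mem x_mem_L x_mem_L
  rw [L, Subgroup.closure_le]
  rintro g (rfl | rfl | rfl | rfl | rfl) <;> cases i
  exacts [⟨b, b_mem_L, fun _ => rfl⟩, ⟨_, aba_mem_L, fun _ => rfl⟩,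
    ⟨_, ada_mem_L, fun _ => rfl⟩, ⟨d, d_mem_L, fun _ => rfl⟩,
    ⟨_, aba_mem_L, fun _ => rfl⟩, ⟨b, b_mem_L, fun _ => rfl⟩,
    ⟨_, aca_mem_L, fun _ => rfl⟩, ⟨c, c_mem_L, fun _ => rfl⟩,
    ⟨_, xx_mem_L, fun _ => rfl⟩, ⟨_, xx_mem_L, fun _ => rfl⟩]

/-- `L` is self-replicating: for every vertex `u` of the binary rooted tree, the set of
sections at `u` of elements of the stabilizer `st_L(u)` coincides with `L` (under the
canonical identification of the subtree `T_u` with `T`, i.e. `w ↦ u ++ w`). -/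
theorem L_self_replicating (u : V) :
    {f : V → V | ∃ g ∈ L, g u = u ∧ ∀ w : V, g (u ++ w) = u ++ f w} =
      {f : V → V | ∃ h ∈ L, f = ⇑h} := by
  change sectionsAt L u = _
  induction u with
  | nil => exact sectionsAt_nil L_le_wreath
  | cons i u ih => rw [sectionsAt_cons L_le_wreath (L_le_restrictCons i), ih]

end GrigTree
end

section
/- The group L generated by the Grigorchuk generators a,b,c,d and the adding machine x has infinite abelianization; more precisely, the image of x in L/[L,L] has infinite order. -/
namespace GrigTree

/-!
A word in `a, b, c, d, x` acts on `i :: v` by moving `i` according to the parity of its swapping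
letters (`a` and `x^{±1}`) and acting on `v` by its section at `i`, which is again a word. The
`x`-exponent sum of a word is the sum of those of its two sections, and sections never increase
the weight (length plus number of non-`a` letters). If a word acts trivially, it has even parity
and its sections act trivially; a strictly lighter section is handled by induction, and a section
of equal weight forces the word to consist of `b, c, d` and `x`-letters of alternating sign, whose
exponent sum vanishes by the parity condition. So the `x`-exponent sum is a homomorphism `L → ℤ`
sending `x` to `1`, and it factors through the abelianization.
-/

inductive Gen | a | b | c | d | x
  deriving DecidableEq

def Gen.perm : Gen → Equiv.Perm V
  | .a => GrigTree.a
  | .b => GrigTree.b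
  | .c => GrigTree.c
  | .d => GrigTree.d
  | .x => GrigTree.x

def Gen.swaps : Gen → Bool
  | .a | .x => true
  | .b | .c | .d => false

/-- A letter `(g, true)` stands for `g` and `(g, false)` for `g⁻¹`, as in `FreeGroup.mk`. -/
abbrev Letter := Gen × Bool

namespace Letter

def perm (ℓ : Letter) : Equiv.Perm V := cond ℓ.2 ℓ.1.perm ℓ.1.perm⁻¹

/-- The section of a letter at the first-level vertex `j`, a word of length at most one. -/
def restrict : Letter → Bool → List Letter
  | (.a, _), _ => []
  | (.b, s), false => [(.a, s)]
  | (.b, s), true => [(.c, s)]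
  | (.c, s), false => [(.a, s)]
  | (.c, s), true => [(.d, s)]
  | (.d, _), false => []
  | (.d, s), true => [(.b, s)]
  | (.x, s), j => if s = j then [(.x, s)] else []

def xExp : Letter → ℤ
  | (.x, true) => 1
  | (.x, false) => -1
  | _ => 0

def weight : Letter → ℕ
  | (.a, _) => 1
  | _ => 2

end Letter

def eval (w : List Letter) : Equiv.Perm V := (w.map Letter.perm).prod

def parity : List Letter → Bool
  | [] => false
  | ℓ :: w => xor ℓ.1.swaps (parity w)

/-- The section of the word `w` at the first-level vertex `i`; the letters of `w` act from right
to left, so each letter is restricted at the image of `i` under the letters to its right. -/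
def restrict : List Letter → Bool → List Letter
  | [], _ => []
  | ℓ :: w, i => ℓ.restrict (xor (parity w) i) ++ restrict w i

def xExp (w : List Letter) : ℤ := (w.map Letter.xExp).sum

def weight (w : List Letter) : ℕ := (w.map Letter.weight).sum

@[simp] lemma eval_cons (ℓ : Letter) (w : List Letter) : eval (ℓ :: w) = ℓ.perm * eval w := by
  simp [eval]

@[simp] lemma eval_append (v w : List Letter) : eval (v ++ w) = eval v * eval w := by
  simp [eval]

@[simp] lemma xExp_cons (ℓ : Letter) (w : List Letter) : xExp (ℓ :: w) = ℓ.xExp + xExp w := by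
  simp [xExp]

@[simp] lemma xExp_append (v w : List Letter) : xExp (v ++ w) = xExp v + xExp w := by
  simp [xExp]

@[simp] lemma weight_cons (ℓ : Letter) (w : List Letter) :
    weight (ℓ :: w) = ℓ.weight + weight w := by
  simp [weight]

@[simp] lemma weight_append (v w : List Letter) : weight (v ++ w) = weight v + weight w := by
  simp [weight]

namespace Letter

lemma perm_cons (ℓ : Letter) (j : Bool) (v : V) :
    ℓ.perm (j :: v) = xor ℓ.1.swaps j :: eval (ℓ.restrict j) v := by
  obtain ⟨g, s⟩ := ℓ
  cases g <;> cases s <;> cases j <;>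
    simp [perm, restrict, Gen.perm, Gen.swaps, eval, a, b, c, d, x, gPerm, gFun, aFun, xFun,
      xInvFun, Equiv.Perm.inv_def, nextSt, usesA]

lemma xExp_restrict_add_restrict_not (ℓ : Letter) (j : Bool) :
    GrigTree.xExp (ℓ.restrict j) + GrigTree.xExp (ℓ.restrict !j) = ℓ.xExp := by
  obtain ⟨g, s⟩ := ℓ
  cases g <;> cases s <;> cases j <;> rfl

lemma weight_restrict_le (ℓ : Letter) (j : Bool) :
    GrigTree.weight (ℓ.restrict j) ≤ ℓ.weight := by
  obtain ⟨g, s⟩ := ℓ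
  cases g <;> cases s <;> cases j <;> decide

lemma xExp_eq_of_weight_restrict_eq (ℓ : Letter) (j : Bool)
    (h : GrigTree.weight (ℓ.restrict j) = ℓ.weight) :
    ℓ.xExp = if ℓ.1.swaps then xExp (.x, j) else 0 := by
  obtain ⟨g, s⟩ := ℓ
  cases g <;> cases s <;> cases j <;> revert h <;> decide

end Letter

lemma eval_apply_cons : ∀ (w : List Letter) (i : Bool) (v : V),
    eval w (i :: v) = xor (parity w) i :: eval (restrict w i) v
  | [], i, v => by simp [eval, parity, restrict]
  | ℓ :: w, i, v => by
    rw [eval_cons, Equiv.Perm.mul_apply, eval_apply_cons w i v, Letter.perm_cons, restrict,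
      eval_append, Equiv.Perm.mul_apply, parity, Bool.xor_assoc]

lemma xExp_restrict_false_add_restrict_true :
    ∀ w : List Letter, xExp (restrict w false) + xExp (restrict w true) = xExp w
  | [] => rfl
  | ℓ :: w => by
    have hℓ := ℓ.xExp_restrict_add_restrict_not (parity w)
    have hw := xExp_restrict_false_add_restrict_true w
    simp only [restrict, xExp_append, xExp_cons, Bool.xor_false, Bool.xor_true]
    omega

lemma weight_restrict_le (i : Bool) : ∀ w : List Letter, weight (restrict w i) ≤ weight w
  | [] => le_rfl
  | ℓ :: w => by
    simp only [restrict, weight_append, weight_cons]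
    exact add_le_add (ℓ.weight_restrict_le _) (weight_restrict_le i w)

/-- When a section is as heavy as the word itself, every letter survives in it, so there are no
`a`'s and the `x`-letters alternate in sign. -/
lemma xExp_eq_of_weight_restrict_eq (i : Bool) : ∀ w : List Letter,
    weight (restrict w i) = weight w → xExp w = if parity w then Letter.xExp (.x, i) else 0
  | [] => fun _ => rfl
  | ℓ :: w => by
    intro h
    simp only [restrict, weight_append, weight_cons] at h
    have hℓ := ℓ.weight_restrict_le (xor (parity w) i)
    have hw := weight_restrict_le i w
    rw [xExp_cons, ℓ.xExp_eq_of_weight_restrict_eq (xor (parity w) i) (by omega),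
      xExp_eq_of_weight_restrict_eq i w (by omega), parity]
    cases ℓ.1.swaps <;> cases parity w <;> cases i <;> rfl

theorem xExp_eq_zero_of_eval_eq_one (w : List Letter) (hw : eval w = 1) : xExp w = 0 := by
  induction hn : weight w using Nat.strong_induction_on generalizing w with
  | _ n ih =>
  have hpar : parity w = false := by
    have h := eval_apply_cons w false []
    rw [hw, Equiv.Perm.one_apply, List.cons.injEq] at h
    simpa using h.1.symm
  have hres (i : Bool) : eval (restrict w i) = 1 := Equiv.ext fun v => by
    have h := eval_apply_cons w i v
    rw [hw, Equiv.Perm.one_apply, List.cons.injEq] at h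
    exact h.2.symm
  by_cases h0 : weight (restrict w false) = weight w
  · simpa [hpar] using xExp_eq_of_weight_restrict_eq false w h0
  by_cases h1 : weight (restrict w true) = weight w
  · simpa [hpar] using xExp_eq_of_weight_restrict_eq true w h1
  have hle0 := weight_restrict_le false w
  have hle1 := weight_restrict_le true w
  have e0 := ih _ (by omega) (restrict w false) (hres false) rfl
  have e1 := ih _ (by omega) (restrict w true) (hres true) rfl
  rw [← xExp_restrict_false_add_restrict_true, e0, e1, add_zero]

lemma lift_perm_mk (w : List Letter) : FreeGroup.lift Gen.perm (FreeGroup.mk w) = eval w :=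
  FreeGroup.lift_mk

def xExpHom : FreeGroup Gen →* Multiplicative ℤ :=
  FreeGroup.lift fun g => Multiplicative.ofAdd (Letter.xExp (g, true))

lemma xExpHom_mk (w : List Letter) :
    xExpHom (FreeGroup.mk w) = Multiplicative.ofAdd (xExp w) := by
  rw [xExpHom, FreeGroup.lift_mk]
  induction w with
  | nil => rfl
  | cons ℓ w ih =>
    obtain ⟨g, s⟩ := ℓ
    rw [List.map_cons, List.prod_cons, ih, xExp_cons, ofAdd_add]
    congr 1
    cases g <;> cases s <;> rfl

lemma ker_lift_perm_le_ker_xExpHom : (FreeGroup.lift Gen.perm).ker ≤ xExpHom.ker := by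
  intro g hg
  rw [MonoidHom.mem_ker, ← FreeGroup.mk_toWord (x := g)] at hg ⊢
  rw [lift_perm_mk] at hg
  rw [xExpHom_mk, xExp_eq_zero_of_eval_eq_one _ hg, ofAdd_zero]

lemma range_lift_perm : (FreeGroup.lift Gen.perm).range = L := by
  rw [FreeGroup.range_lift_eq_closure, L]
  congr 1
  ext y
  constructor
  · rintro ⟨g, rfl⟩
    cases g <;> simp [Gen.perm]
  · rintro (rfl | rfl | rfl | rfl | rfl)
    exacts [⟨.a, rfl⟩, ⟨.b, rfl⟩, ⟨.c, rfl⟩, ⟨.d, rfl⟩, ⟨.x, rfl⟩]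

def toL : FreeGroup Gen →* L :=
  (FreeGroup.lift Gen.perm).codRestrict L fun g => range_lift_perm ▸ ⟨g, rfl⟩

lemma toL_surjective : Function.Surjective toL := by
  rintro ⟨y, hy⟩
  rw [← range_lift_perm] at hy
  obtain ⟨g, rfl⟩ := hy
  exact ⟨g, rfl⟩

noncomputable def xExponent : L →* Multiplicative ℤ :=
  toL.liftOfSurjective toL_surjective
    ⟨xExpHom, by rw [toL, MonoidHom.ker_codRestrict]; exact ker_lift_perm_le_ker_xExpHom⟩

lemma xExponent_x (hx : x ∈ L) : xExponent ⟨x, hx⟩ = Multiplicative.ofAdd 1 := by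
  have : (⟨x, hx⟩ : L) = toL (FreeGroup.of .x) := rfl
  rw [this, xExponent, MonoidHom.liftOfRightInverse_comp_apply]
  rfl

lemma _root_.Abelianization.not_isOfFinOrder_of_map_ne_one {G H : Type*} [Group G]
    [CommGroup H] [IsMulTorsionFree H] {g : G} (φ : G →* H) (hφ : φ g ≠ 1) :
    ¬ IsOfFinOrder (Abelianization.of g) := fun h =>
  not_isOfFinOrder_of_isMulTorsionFree (by simpa using hφ)
    ((Abelianization.lift φ).isOfFinOrder h)

/-- The abelianization `L / [L, L]` is infinite; more precisely the image of the
adding machine `x` in the abelianization has infinite order. -/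
theorem L_abelianization_infinite (hx : x ∈ L) :
    Infinite (Abelianization L) ∧
      ¬ IsOfFinOrder (Abelianization.of (⟨x, hx⟩ : L)) := by
  have hx_inf : ¬ IsOfFinOrder (Abelianization.of (⟨x, hx⟩ : L)) :=
    Abelianization.not_isOfFinOrder_of_map_ne_one xExponent (by rw [xExponent_x]; decide)
  exact ⟨not_finite_iff_infinite.mp fun _ => hx_inf (isOfFinOrder_of_finite _), hx_inf⟩

end GrigTree
end

section
/- Let G be a level-transitive branch group acting on a rooted tree and N a nontrivial normal subgroup of G. Then the quotient G/N is virtually abelian. -/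
/-- The vertices at level `n` of the spherically homogeneous rooted tree with
branching index `m` : a vertex is a sequence choosing one of `m i` children at each
level `i < n`. -/
def Vtx (m : ℕ → ℕ) (n : ℕ) : Type := ∀ i : Fin n, Fin (m i)

/-- The parent (truncation) map from level `n + 1` to level `n`. -/
def trunc (m : ℕ → ℕ) {n : ℕ} (v : Vtx m (n + 1)) : Vtx m n := fun i => v i.castSucc

/-- The automorphism group of the spherically homogeneous rooted tree `T_m`: families
of permutations of the levels commuting with the parent maps. -/
def treeAutGroup (m : ℕ → ℕ) : Subgroup (∀ n, Equiv.Perm (Vtx m n)) where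
  carrier := {σ | ∀ (n : ℕ) (v : Vtx m (n + 1)), trunc m (σ (n + 1) v) = σ n (trunc m v)}
  one_mem' := fun _ _ => rfl
  mul_mem' := by
    intro p q hp hq n v
    show trunc m (p (n + 1) (q (n + 1) v)) = p n (q n (trunc m v))
    rw [hp, hq]
  inv_mem' := by
    intro p hp n v
    show trunc m ((p (n + 1))⁻¹ v) = (p n)⁻¹ (trunc m v)
    have h := hp n ((p (n + 1))⁻¹ v)
    rw [show (p (n + 1)) ((p (n + 1))⁻¹ v) = v from Equiv.apply_symm_apply _ _] at h
    rw [h]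
    exact (Equiv.symm_apply_apply _ _).symm

variable (m : ℕ → ℕ) {Γ : Type*} [Group Γ] (φ : Γ →* ↥(treeAutGroup m))

/-- `w` is a descendant of `v` (i.e. lies in the subtree `T_v`). -/
def IsBelow {k n : ℕ} (v : Vtx m k) (w : Vtx m n) : Prop :=
  ∃ h : k ≤ n, ∀ i : Fin k, w (Fin.castLE h i) = v i

/-- The rigid stabilizer of a vertex `v`: the elements of `Γ` acting trivially outside
the subtree `T_v`. -/
def rist {k : ℕ} (v : Vtx m k) : Subgroup Γ where
  carrier := {g | ∀ (n : ℕ) (w : Vtx m n), ¬ IsBelow m v w → (φ g).1 n w = w}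
  one_mem' := by intro n w _; rw [map_one]; rfl
  mul_mem' := by
    intro g h hg hh n w hw
    rw [map_mul]
    show (φ g).1 n ((φ h).1 n w) = w
    rw [hh n w hw, hg n w hw]
  inv_mem' := by
    intro g hg n w hw
    rw [map_inv]
    show ((φ g).1 n)⁻¹ w = w
    conv_lhs => rw [← hg n w hw]
    exact Equiv.symm_apply_apply _ _

/-- The rigid stabilizer of the `n`-th level: the subgroup generated by the rigid
stabilizers of the vertices of level `n`. -/
def ristLevel (n : ℕ) : Subgroup Γ := ⨆ v : Vtx m n, rist m φ v

/-! If `g ∈ N` moves a vertex `v`, every `b ∈ rist v` is congruent modulo `N` to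
`g b g⁻¹ ∈ rist (g v)`, and rigid stabilizers of distinct vertices of one level commute. So the
image of `rist v` in `Γ ⧸ N` is abelian, and by level transitivity so is the image of every rigid
vertex stabilizer of that level. The image of the rigid level stabilizer is then generated by
pairwise commuting elements, hence abelian, and it has finite index. -/

theorem Subgroup.FiniteIndex.map_of_surjective {G G' : Type*} [Group G] [Group G']
    {H : Subgroup G} [H.FiniteIndex] {f : G →* G'} (hf : Function.Surjective f) :
    (H.map f).FiniteIndex :=
  ⟨fun h0 => FiniteIndex.index_ne_zero (zero_dvd_iff.mp (h0 ▸ H.index_map_dvd hf))⟩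

theorem Subgroup.mul_comm_of_mem_closure {G : Type*} [Group G] {s : Set G}
    (hs : ∀ x ∈ s, ∀ y ∈ s, x * y = y * x) {x y : G} (hx : x ∈ closure s) (hy : y ∈ closure s) :
    x * y = y * x :=
  Set.centralizer_centralizer_comm_of_comm hs _ (closure_le_centralizer_centralizer s hx) _
    (closure_le_centralizer_centralizer s hy)

def ancestor {k n : ℕ} (h : k ≤ n) (w : Vtx m n) : Vtx m k := fun i => w (Fin.castLE h i)

theorem ancestor_treeAut {σ : ∀ n, Equiv.Perm (Vtx m n)} (hσ : σ ∈ treeAutGroup m)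
    {k n : ℕ} (h : k ≤ n) (w : Vtx m n) : ancestor m h (σ n w) = σ k (ancestor m h w) := by
  induction n, h using Nat.le_induction with
  | base => rfl
  | succ n h ih => exact (congrArg (ancestor m h) (hσ n w)).trans (ih (trunc m w))

theorem isBelow_iff_ancestor {k n : ℕ} {v : Vtx m k} {w : Vtx m n} :
    IsBelow m v w ↔ ∃ h : k ≤ n, ancestor m h w = v :=
  exists_congr fun _ => funext_iff.symm

theorem IsBelow.treeAut {σ : ∀ n, Equiv.Perm (Vtx m n)} (hσ : σ ∈ treeAutGroup m)
    {k n : ℕ} {v : Vtx m k} {w : Vtx m n} (hvw : IsBelow m v w) :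
    IsBelow m (σ k v) (σ n w) := by
  obtain ⟨h, rfl⟩ := (isBelow_iff_ancestor m).mp hvw
  exact (isBelow_iff_ancestor m).mpr ⟨h, ancestor_treeAut m hσ h w⟩

theorem IsBelow.unique {k n : ℕ} {v u : Vtx m k} {w : Vtx m n}
    (hv : IsBelow m v w) (hu : IsBelow m u w) : v = u := by
  obtain ⟨_, rfl⟩ := (isBelow_iff_ancestor m).mp hv
  obtain ⟨_, rfl⟩ := (isBelow_iff_ancestor m).mp hu
  rfl

theorem treeAction_mul (g h : Γ) (n : ℕ) (w : Vtx m n) :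
    (φ (g * h)).1 n w = (φ g).1 n ((φ h).1 n w) := by
  rw [map_mul]; rfl

theorem treeAction_inv (g : Γ) (n : ℕ) (w : Vtx m n) :
    (φ g⁻¹).1 n w = ((φ g).1 n).symm w := by
  rw [map_inv]; rfl

theorem exists_treeAction_ne_of_ne_one {σ : treeAutGroup m} (hσ : σ ≠ 1) :
    ∃ (k : ℕ) (v : Vtx m k), σ.1 k v ≠ v := by
  by_contra! h
  exact hσ (Subtype.ext (funext fun n => Equiv.ext (h n)))

theorem conj_mem_rist {k : ℕ} {v : Vtx m k} {b : Γ} (hb : b ∈ rist m φ v) (g : Γ) :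
    g * b * g⁻¹ ∈ rist m φ ((φ g).1 k v) := by
  intro n w hw
  have hnb : ¬ IsBelow m v (((φ g).1 n).symm w) := fun h =>
    hw (by simpa only [Equiv.apply_symm_apply] using h.treeAut m (φ g).2)
  rw [treeAction_mul, treeAction_mul, treeAction_inv, hb n _ hnb, Equiv.apply_symm_apply]

/-- Rigid stabilizers of distinct vertices of one level have disjoint supports. -/
theorem commute_of_mem_rist (hfaithful : Function.Injective φ) {k : ℕ} {v u : Vtx m k}
    (hvu : v ≠ u) {a c : Γ} (ha : a ∈ rist m φ v) (hc : c ∈ rist m φ u) : Commute a c := by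
  have hdisj (n : ℕ) : ((φ a).1 n).Disjoint ((φ c).1 n) := fun w =>
    (em (IsBelow m v w)).elim (fun hv => .inr (hc n w fun hu => hvu (hv.unique m hu)))
      (fun hv => .inl (ha n w hv))
  show a * c = c * a
  apply hfaithful
  rw [map_mul, map_mul]
  exact Subtype.ext (funext fun n => (hdisj n).commute.eq)

theorem commute_mk_of_mem_rist (hfaithful : Function.Injective φ) {N : Subgroup Γ} [N.Normal]
    {g : Γ} (hgN : g ∈ N) {k : ℕ} {v : Vtx m k} (hgv : (φ g).1 k v ≠ v) {a b : Γ}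
    (ha : a ∈ rist m φ v) (hb : b ∈ rist m φ v) : Commute (a : Γ ⧸ N) (b : Γ ⧸ N) := by
  have hg : (g : Γ ⧸ N) = 1 := (QuotientGroup.eq_one_iff g).mpr hgN
  simpa only [map_mul, map_inv, QuotientGroup.mk'_apply, hg, one_mul, inv_one, mul_one] using
    (commute_of_mem_rist m φ hfaithful hgv.symm ha (conj_mem_rist m φ hb g)).map
      (QuotientGroup.mk' N)

theorem exists_mem_treeAction_ne_of_transitive
    (htrans : ∀ (n : ℕ) (v w : Vtx m n), ∃ g : Γ, (φ g).1 n v = w) {N : Subgroup Γ} [N.Normal]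
    {g : Γ} (hgN : g ∈ N) {k : ℕ} {v : Vtx m k} (hgv : (φ g).1 k v ≠ v) (w : Vtx m k) :
    ∃ g' ∈ N, (φ g').1 k w ≠ w := by
  obtain ⟨t, rfl⟩ := htrans k v w
  refine ⟨t * g * t⁻¹, ‹N.Normal›.conj_mem g hgN t, ?_⟩
  rw [treeAction_mul, treeAction_mul, treeAction_inv, Equiv.symm_apply_apply]
  exact fun h => hgv ((φ t).1 k |>.injective h)

theorem branch_quotient_virtually_abelian
    (hfaithful : Function.Injective φ)
    (htrans : ∀ (n : ℕ) (v w : Vtx m n), ∃ g : Γ, (φ g).1 n v = w)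
    (hfi : ∀ n : ℕ, (ristLevel m φ n).FiniteIndex)
    (N : Subgroup Γ) [N.Normal] (hN : N ≠ ⊥) :
    ∃ H : Subgroup (Γ ⧸ N), H.FiniteIndex ∧ ∀ a ∈ H, ∀ b ∈ H, a * b = b * a := by
  obtain ⟨g, hgN, hg1⟩ := N.bot_or_exists_ne_one.resolve_left hN
  obtain ⟨k, v, hgv⟩ := exists_treeAction_ne_of_ne_one m ((map_ne_one_iff φ hfaithful).mpr hg1)
  have := hfi k
  refine ⟨(ristLevel m φ k).map (QuotientGroup.mk' N),
    Subgroup.FiniteIndex.map_of_surjective (QuotientGroup.mk'_surjective N), fun x hx y hy => ?_⟩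
  rw [ristLevel, Subgroup.map_iSup, Subgroup.iSup_eq_closure] at hx hy
  refine Subgroup.mul_comm_of_mem_closure ?_ hx hy
  simp only [Set.mem_iUnion, SetLike.mem_coe, Subgroup.mem_map]
  rintro _ ⟨w, a, ha, rfl⟩ _ ⟨u, b, hb, rfl⟩
  rcases eq_or_ne w u with rfl | hwu
  · obtain ⟨g', hg'N, hg'w⟩ := exists_mem_treeAction_ne_of_transitive m φ htrans hgN hgv w
    exact commute_mk_of_mem_rist m φ hfaithful hg'N hg'w ha hb
  · exact ((commute_of_mem_rist m φ hfaithful hwu ha hb).map _).eq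
end

section
/- Let X be a proper geodesic δ-hyperbolic space and G a group of isometries of X such that some point of the Gromov boundary ∂X has a finite G-orbit with at least 3 elements. Then G is elliptic, i.e. G has a bounded orbit in X. -/
/-!
Distinct boundary points have bounded Gromov products, so the finitely many points `u i` are
pairwise `M`-separated as seen from `o`, for one `M`. Every `g` permutes them, hence they are
also pairwise `(M + 2δ)`-separated as seen from `g • o`. In a `δ`-hyperbolic space, two points
from which three boundary points look pairwise separated are close: at most one of the three
points lies "behind" `g • o` as seen from `o`, at most one behind `o` as seen from `g • o`, and
the third one bounds `dist o (g • o)` by `2M + 4δ`, uniformly in `g`.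
-/

open Filter

/-- The Gromov product `⟨x, y⟩_o`. -/
noncomputable def gromovProd {X : Type*} [MetricSpace X] (o x y : X) : ℝ :=
  (dist x o + dist y o - dist x y) / 2

/-- A sequence converges at infinity (defines a point of the Gromov boundary `∂X`)
if the Gromov products of pairs of its terms tend to infinity. -/
def ConvergesAtInfty {X : Type*} [MetricSpace X] (o : X) (u : ℕ → X) : Prop :=
  Tendsto (fun p : ℕ × ℕ => gromovProd o (u p.1) (u p.2)) atTop atTop

/-- Two sequences converging at infinity define the same boundary point if the Gromov
products of their terms tend to infinity. -/
def SameBoundaryPoint {X : Type*} [MetricSpace X] (o : X) (u v : ℕ → X) : Prop :=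
  Tendsto (fun p : ℕ × ℕ => gromovProd o (u p.1) (v p.2)) atTop atTop


section GromovProduct

variable {X : Type*} [MetricSpace X]

lemma gromovProd_comm (o x y : X) : gromovProd o x y = gromovProd o y x := by
  unfold gromovProd; rw [dist_comm x y]; ring

lemma gromovProd_le_add_dist (o o' x y : X) :
    gromovProd o x y ≤ gromovProd o' x y + dist o o' := by
  unfold gromovProd
  linarith [dist_triangle x o' o, dist_triangle y o' o, dist_comm o' o]

lemma gromovProd_add_gromovProd (x y w : X) :
    gromovProd x y w + gromovProd y x w = dist x y := by
  unfold gromovProd; rw [dist_comm y x, dist_comm w x, dist_comm w y]; ring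

lemma Isometry.gromovProd_eq {Y : Type*} [MetricSpace Y] {f : X → Y} (hf : Isometry f)
    (o x y : X) : gromovProd (f o) (f x) (f y) = gromovProd o x y := by
  simp only [gromovProd, hf.dist_eq]

end GromovProduct

namespace FourPointHyperbolic

variable {X : Type*} [MetricSpace X] {δ : ℝ}

lemma nonneg (hhyp : FourPointHyperbolic X δ) (x : X) : 0 ≤ δ := by
  simpa using hhyp x x x x

lemma min_sub_le_gromovProd (hhyp : FourPointHyperbolic X δ) (o x y z : X) :
    min (gromovProd o x y) (gromovProd o y z) - δ ≤ gromovProd o x z := by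
  have h := hhyp y x z o
  have hxy := dist_comm x y
  unfold gromovProd
  rcases le_total (dist y x + dist z o) (dist y z + dist x o) with hm | hm
  · rw [max_eq_right hm] at h
    linarith [min_le_right ((dist x o + dist y o - dist x y) / 2)
      ((dist y o + dist z o - dist y z) / 2)]
  · rw [max_eq_left hm] at h
    linarith [min_le_left ((dist x o + dist y o - dist x y) / 2)
      ((dist y o + dist z o - dist y z) / 2)]

lemma min_min_sub_le_gromovProd (hhyp : FourPointHyperbolic X δ) (o x y z w : X) :
    min (gromovProd o x y) (min (gromovProd o y z) (gromovProd o z w)) - 2 * δ ≤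
      gromovProd o x w := by
  have hδ := hhyp.nonneg o
  have hm_xy_yz : min (gromovProd o x y) (min (gromovProd o y z) (gromovProd o z w)) ≤
      min (gromovProd o x y) (gromovProd o y z) := min_le_min_left _ (min_le_left _ _)
  have hm_zw : min (gromovProd o x y) (min (gromovProd o y z) (gromovProd o z w)) ≤
      gromovProd o z w := (min_le_right _ _).trans (min_le_right _ _)
  have hxz : min (gromovProd o x y) (min (gromovProd o y z) (gromovProd o z w)) - δ ≤
      min (gromovProd o x z) (gromovProd o z w) :=
    le_min (by linarith [hhyp.min_sub_le_gromovProd o x y z]) (by linarith)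
  linarith [hhyp.min_sub_le_gromovProd o x z w]

lemma gromovProd_le_or_gromovProd_le (hhyp : FourPointHyperbolic X δ) {z p q : X} {K : ℝ}
    (hpq : gromovProd z p q ≤ K) (w : X) :
    gromovProd z w p ≤ K + δ ∨ gromovProd z w q ≤ K + δ := by
  by_contra! h
  have := hhyp.min_sub_le_gromovProd z p w q
  rw [gromovProd_comm z p w] at this
  linarith [lt_min h.1 h.2]

/-- At most one of `a, b, c` has a large Gromov product with `y` seen from `x`, and at most one
with `x` seen from `y`; for a third point `w`, `dist x y = (y|w)_x + (x|w)_y` is then small. -/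
lemma dist_le_of_gromovProd_le (hhyp : FourPointHyperbolic X δ) {x y a b c : X} {K K' : ℝ}
    (hab : gromovProd x a b ≤ K) (hac : gromovProd x a c ≤ K) (hbc : gromovProd x b c ≤ K)
    (hab' : gromovProd y a b ≤ K') (hac' : gromovProd y a c ≤ K')
    (hbc' : gromovProd y b c ≤ K') :
    dist x y ≤ K + K' + 2 * δ := by
  have := hhyp.gromovProd_le_or_gromovProd_le hab y
  have := hhyp.gromovProd_le_or_gromovProd_le hac y
  have := hhyp.gromovProd_le_or_gromovProd_le hbc y
  have := hhyp.gromovProd_le_or_gromovProd_le hab' x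
  have := hhyp.gromovProd_le_or_gromovProd_le hac' x
  have := hhyp.gromovProd_le_or_gromovProd_le hbc' x
  have hfar : (gromovProd x y a ≤ K + δ ∧ gromovProd y x a ≤ K' + δ) ∨
      (gromovProd x y b ≤ K + δ ∧ gromovProd y x b ≤ K' + δ) ∨
      (gromovProd x y c ≤ K + δ ∧ gromovProd y x c ≤ K' + δ) := by
    tauto
  rcases hfar with ⟨h, h'⟩ | ⟨h, h'⟩ | ⟨h, h'⟩ <;>
    linarith [gromovProd_add_gromovProd x y a, gromovProd_add_gromovProd x y b,
      gromovProd_add_gromovProd x y c]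

end FourPointHyperbolic

section Boundary

variable {X : Type*} [MetricSpace X] {δ : ℝ} {o : X} {u v w u' v' : ℕ → X}

lemma SameBoundaryPoint.exists_le_gromovProd (h : SameBoundaryPoint o u v) (b : ℝ) :
    ∃ N, ∀ n m, N ≤ n → N ≤ m → b ≤ gromovProd o (u n) (v m) := by
  obtain ⟨i, hi⟩ := tendsto_atTop_atTop.1 h b
  exact ⟨max i.1 i.2, fun n m hn hm => hi (n, m) ⟨le_of_max_le_left hn, le_of_max_le_right hm⟩⟩

lemma SameBoundaryPoint.symm (h : SameBoundaryPoint o u v) : SameBoundaryPoint o v u := by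
  have hswap : Tendsto (Prod.swap : ℕ × ℕ → ℕ × ℕ) atTop atTop :=
    tendsto_atTop_atTop_of_monotone (fun _ _ h => ⟨h.2, h.1⟩) fun p => ⟨p.swap, le_rfl⟩
  exact (h.comp hswap).congr fun p => gromovProd_comm o (u p.2) (v p.1)

lemma SameBoundaryPoint.trans (hhyp : FourPointHyperbolic X δ) (huv : SameBoundaryPoint o u v)
    (hvw : SameBoundaryPoint o v w) : SameBoundaryPoint o u w := by
  have hl : Tendsto (fun p : ℕ × ℕ => (p.1, max p.1 p.2)) atTop atTop :=
    tendsto_atTop_atTop_of_monotone (fun _ _ h => ⟨h.1, max_le_max h.1 h.2⟩)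
      fun p => ⟨p, le_rfl, le_max_right _ _⟩
  have hr : Tendsto (fun p : ℕ × ℕ => (max p.1 p.2, p.2)) atTop atTop :=
    tendsto_atTop_atTop_of_monotone (fun _ _ h => ⟨max_le_max h.1 h.2, h.2⟩)
      fun p => ⟨p, le_max_left _ _, le_rfl⟩
  have h₁ : Tendsto (fun p : ℕ × ℕ => gromovProd o (u p.1) (v (max p.1 p.2))) atTop atTop :=
    (huv.comp hl).congr fun _ => rfl
  have h₂ : Tendsto (fun p : ℕ × ℕ => gromovProd o (v (max p.1 p.2)) (w p.2)) atTop atTop :=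
    (hvw.comp hr).congr fun _ => rfl
  refine tendsto_atTop.2 fun b => ?_
  filter_upwards [tendsto_atTop.1 h₁ (b + δ), tendsto_atTop.1 h₂ (b + δ)] with p hp₁ hp₂
  linarith [hhyp.min_sub_le_gromovProd o (u p.1) (v (max p.1 p.2)) (w p.2), le_min hp₁ hp₂]

lemma sameBoundaryPoint_basepoint_iff (o o' : X) :
    SameBoundaryPoint o u v ↔ SameBoundaryPoint o' u v := by
  have key : ∀ o o' : X, SameBoundaryPoint o u v → SameBoundaryPoint o' u v :=
    fun o o' h => tendsto_atTop_mono
      (fun p => by linarith [gromovProd_le_add_dist o o' (u p.1) (v p.2)])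
      (tendsto_atTop_add_const_right _ (-dist o o') h)
  exact ⟨key o o', key o' o⟩

lemma Isometry.sameBoundaryPoint_comp_iff {f : X → X} (hf : Isometry f) :
    SameBoundaryPoint o (fun n => f (u n)) (fun n => f (v n)) ↔ SameBoundaryPoint o u v := by
  rw [sameBoundaryPoint_basepoint_iff o (f o)]
  simp only [SameBoundaryPoint, hf.gromovProd_eq]

lemma eventually_gromovProd_le_of_frequently (hhyp : FourPointHyperbolic X δ)
    (hu : SameBoundaryPoint o u u') (hv : SameBoundaryPoint o v v') {M : ℝ}
    (h : ∃ᶠ q : ℕ × ℕ in atTop, gromovProd o (u' q.1) (v' q.2) ≤ M) :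
    ∀ᶠ p : ℕ × ℕ in atTop, gromovProd o (u p.1) (v p.2) ≤ M + 2 * δ := by
  obtain ⟨N₁, hN₁⟩ := hu.exists_le_gromovProd (M + 2 * δ + 1)
  obtain ⟨N₂, hN₂⟩ := hv.exists_le_gromovProd (M + 2 * δ + 1)
  obtain ⟨⟨n', m'⟩, ⟨hn', hm'⟩, hM⟩ := frequently_atTop.1 h (max N₁ N₂, max N₁ N₂)
  filter_upwards [eventually_ge_atTop (max N₁ N₂, max N₁ N₂)] with ⟨n, m⟩ ⟨hn, hm⟩
  by_contra! hlt
  have hu' : M + 2 * δ + 1 ≤ gromovProd o (u' n') (u n) := by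
    rw [gromovProd_comm]; exact hN₁ n n' (le_of_max_le_left hn) (le_of_max_le_left hn')
  have hv' : M + 2 * δ + 1 ≤ gromovProd o (v m) (v' m') :=
    hN₂ m m' (le_of_max_le_right hm) (le_of_max_le_right hm')
  have hmin : M + 2 * δ < min (gromovProd o (u' n') (u n))
      (min (gromovProd o (u n) (v m)) (gromovProd o (v m) (v' m'))) :=
    lt_min (by linarith) (lt_min hlt (by linarith))
  linarith [hhyp.min_min_sub_le_gromovProd o (u' n') (u n) (v m) (v' m')]

lemma exists_eventually_gromovProd_le (hhyp : FourPointHyperbolic X δ)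
    (hu : ConvergesAtInfty o u) (hv : ConvergesAtInfty o v) (huv : ¬ SameBoundaryPoint o u v) :
    ∃ M, ∀ᶠ p : ℕ × ℕ in atTop, gromovProd o (u p.1) (v p.2) ≤ M := by
  simp only [SameBoundaryPoint, tendsto_atTop, not_forall, not_eventually, not_le] at huv
  obtain ⟨M, hM⟩ := huv
  exact ⟨M + 2 * δ, eventually_gromovProd_le_of_frequently hhyp hu hv (hM.mono fun _ => le_of_lt)⟩

end Boundary

section FiniteFamily

variable {X : Type*} [MetricSpace X] {δ : ℝ} {o : X} {ι : Type*} {u : ι → ℕ → X}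

lemma exists_eventually_forall_gromovProd_le [Finite ι] (hhyp : FourPointHyperbolic X δ)
    (hconv : ∀ i, ConvergesAtInfty o (u i))
    (hdistinct : ∀ i j, i ≠ j → ¬ SameBoundaryPoint o (u i) (u j)) :
    ∃ M, ∀ᶠ p : ℕ × ℕ in atTop, ∀ i j, i ≠ j → gromovProd o (u i p.1) (u j p.2) ≤ M := by
  have hpair : ∀ i j, ∃ M, i ≠ j → ∀ᶠ p : ℕ × ℕ in atTop,
      gromovProd o (u i p.1) (u j p.2) ≤ M := by
    intro i j
    by_cases hij : i = j
    · exact ⟨0, (absurd hij ·)⟩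
    · exact (exists_eventually_gromovProd_le hhyp (hconv i) (hconv j) (hdistinct i j hij)).imp
        fun _ h _ => h
  choose M hM using hpair
  obtain ⟨M₀, hM₀⟩ := Finite.exists_le (Function.uncurry M)
  exact ⟨M₀, eventually_all.2 fun i => eventually_all.2 fun j => eventually_imp_distrib_left.2
    fun hij => (hM i j hij).mono fun _ h => h.trans (hM₀ (i, j))⟩

lemma injective_of_sameBoundaryPoint_comp (hhyp : FourPointHyperbolic X δ) {f : X → X}
    (hf : Isometry f) (hdistinct : ∀ i j, i ≠ j → ¬ SameBoundaryPoint o (u i) (u j))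
    {σ : ι → ι} (hσ : ∀ i, SameBoundaryPoint o (fun n => f (u i n)) (u (σ i))) :
    Function.Injective σ := by
  intro i j hij
  by_contra hne
  refine hdistinct i j hne (hf.sameBoundaryPoint_comp_iff.1 ?_)
  exact (hσ i).trans hhyp (hij ▸ (hσ j).symm)

lemma eventually_forall_gromovProd_comp_le [Finite ι] (hhyp : FourPointHyperbolic X δ)
    {f : X → X} (hf : Isometry f) (hdistinct : ∀ i j, i ≠ j → ¬ SameBoundaryPoint o (u i) (u j))
    {σ : ι → ι} (hσ : ∀ i, SameBoundaryPoint o (fun n => f (u i n)) (u (σ i))) {M : ℝ}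
    (hM : ∀ᶠ p : ℕ × ℕ in atTop, ∀ i j, i ≠ j → gromovProd o (u i p.1) (u j p.2) ≤ M) :
    ∀ᶠ p : ℕ × ℕ in atTop, ∀ i j, i ≠ j →
      gromovProd o (f (u i p.1)) (f (u j p.2)) ≤ M + 2 * δ := by
  have hσinj := injective_of_sameBoundaryPoint_comp hhyp hf hdistinct hσ
  exact eventually_all.2 fun i => eventually_all.2 fun j => eventually_imp_distrib_left.2
    fun hij => eventually_gromovProd_le_of_frequently hhyp (hσ i) (hσ j)
      (hM.frequently.mono fun _ h => h _ _ (hσinj.ne hij))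

lemma dist_le_of_eventually_forall_gromovProd_le (hhyp : FourPointHyperbolic X δ) {x y : X}
    {a b c : ι} (hab : a ≠ b) (hac : a ≠ c) (hbc : b ≠ c) {K K' : ℝ}
    (hx : ∀ᶠ p : ℕ × ℕ in atTop, ∀ i j, i ≠ j → gromovProd x (u i p.1) (u j p.2) ≤ K)
    (hy : ∀ᶠ p : ℕ × ℕ in atTop, ∀ i j, i ≠ j → gromovProd y (u i p.1) (u j p.2) ≤ K') :
    dist x y ≤ K + K' + 2 * δ := by
  obtain ⟨n, hxn, hyn⟩ := (tendsto_atTop_diagonal.eventually (hx.and hy)).exists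
  exact hhyp.dist_le_of_gromovProd_le (hxn a b hab) (hxn a c hac) (hxn b c hbc)
    (hyn a b hab) (hyn a c hac) (hyn b c hbc)

end FiniteFamily

/-- If a group `G` acts by isometries on a proper geodesic `δ`-hyperbolic space `X`
and some point of the Gromov boundary `∂X` (represented by a sequence `u 0` converging
at infinity) has a finite `G`-orbit with at least `3` elements (represented by the
pairwise distinct boundary points `u 0, …, u (k-1)`), then `G` is elliptic: it has a
bounded orbit in `X`. -/
theorem elliptic_of_finite_boundary_orbit {X : Type*} [MetricSpace X]
    (δ : ℝ) (hhyp : FourPointHyperbolic X δ)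
    {G : Type*} [Group G] [MulAction G X]
    (hiso : ∀ g : G, Isometry fun t : X => g • t)
    (o : X) (k : ℕ) (hk : 3 ≤ k) (u : Fin k → ℕ → X)
    (hconv : ∀ i, ConvergesAtInfty o (u i))
    (hdistinct : ∀ i j, i ≠ j → ¬ SameBoundaryPoint o (u i) (u j))
    (hinv : ∀ (g : G) (i), ∃ j, SameBoundaryPoint o (fun n => g • u i n) (u j)) :
    ∃ x : X, Bornology.IsBounded (Set.range fun g : G => g • x) := by
  obtain ⟨M, hM⟩ := exists_eventually_forall_gromovProd_le hhyp hconv hdistinct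
  obtain ⟨a, b, c, hab, hac, hbc⟩ :=
    (Fintype.two_lt_card_iff (α := Fin k)).1 (by rw [Fintype.card_fin]; omega)
  refine ⟨o, (Metric.isBounded_closedBall (x := o) (r := M + 2 * δ + M + 2 * δ)).subset ?_⟩
  rintro _ ⟨g, rfl⟩
  choose σ hσ using hinv g⁻¹
  have hMg : ∀ᶠ p : ℕ × ℕ in atTop, ∀ i j, i ≠ j →
      gromovProd (g • o) (u i p.1) (u j p.2) ≤ M + 2 * δ := by
    refine (eventually_forall_gromovProd_comp_le hhyp (hiso g⁻¹) hdistinct hσ hM).mono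
      fun p h i j hij => ?_
    have hg := (hiso g⁻¹).gromovProd_eq (g • o) (u i p.1) (u j p.2)
    simp only [inv_smul_smul] at hg
    exact hg ▸ h i j hij
  exact dist_le_of_eventually_forall_gromovProd_le hhyp hab hac hbc hMg hM
end
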